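/- arXiv:1408.0166 — 3 statements merged into one kernel-verified Lean document; each statement's English description precedes it below -/
import Mathlib

section
/- If φ : ℝ → ℝ is twice differentiable and satisfies φ'' + (3/2)ω φ' + (3/2)φ = 0, then for t > t₀ the function u(t,x,y) = (t-t₀)^{-2} exp(-(x-x₀)²/(4(t-t₀))) · φ(ω), where ω = ((t-t₀)(x+x₀) - 2(y-y₀))/(t-t₀)^{3/2}, satisfies u_t - u_xx + x u_y = 0. -/
/-!
Write u = A · φ(ω) with τ = t - t₀ and A = τ⁻² exp(-(x - x₀)²/(4τ)). Then (∂ₜ - ∂ₓ²)A = -3A/(2τ),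
ω_x² = 1/τ, and the coefficient of φ'(ω), namely ω_t - 2(A_x/A)ω_x + x ω_y, equals -3ω/(2τ).
Hence u_t - u_xx + x u_y = -(A/τ)(φ'' + (3/2)ωφ' + (3/2)φ)(ω), which vanishes by the ODE.
-/

open Real

namespace KolmogorovAnsatz

lemma rpow_three_halves {τ : ℝ} (hτ : 0 ≤ τ) : τ ^ ((3 : ℝ) / 2) = τ * √τ := by
  rw [sqrt_eq_rpow, ← rpow_one_add' hτ (by norm_num)]
  norm_num

noncomputable def kolmogorovOp (u : ℝ → ℝ → ℝ → ℝ) (t x y : ℝ) : ℝ :=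
  deriv (fun t => u t x y) t - deriv (deriv fun x => u t x y) x + x * deriv (u t x) y

variable {t₀ x₀ y₀ t x y : ℝ}

noncomputable def gaussFactor (t₀ x₀ t x : ℝ) : ℝ :=
  ((t - t₀) ^ 2)⁻¹ * exp (-(x - x₀) ^ 2 / (4 * (t - t₀)))

noncomputable def similarityVar (t₀ x₀ y₀ t x y : ℝ) : ℝ :=
  ((t - t₀) * (x + x₀) - 2 * (y - y₀)) / (t - t₀) ^ ((3 : ℝ) / 2)

lemma hasDerivAt_gaussFactor_x (t₀ x₀ t x : ℝ) :
    HasDerivAt (gaussFactor t₀ x₀ t) (gaussFactor t₀ x₀ t x * (-(x - x₀) / (2 * (t - t₀)))) x := by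
  have h := ((((hasDerivAt_id' x).sub_const x₀).fun_pow 2).fun_neg.div_const
    (4 * (t - t₀))).exp.const_mul ((t - t₀) ^ 2)⁻¹
  refine h.congr_deriv ?_
  simp only [gaussFactor]
  by_cases hτ : t - t₀ = 0
  · simp [hτ]
  · field_simp; ring

lemma hasDerivAt_gaussFactor_t (ht : t ≠ t₀) :
    HasDerivAt (fun t => gaussFactor t₀ x₀ t x)
      (gaussFactor t₀ x₀ t x * ((x - x₀) ^ 2 / (4 * (t - t₀) ^ 2) - 2 / (t - t₀))) t := by
  have hτ : t - t₀ ≠ 0 := sub_ne_zero.2 ht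
  have h := ((((hasDerivAt_id' t).sub_const t₀).fun_pow 2).fun_inv (pow_ne_zero 2 hτ)).fun_mul
    ((hasDerivAt_const t (-(x - x₀) ^ 2)).fun_div (((hasDerivAt_id' t).sub_const t₀).const_mul 4)
      (by simpa using hτ)).exp
  refine h.congr_deriv ?_
  simp only [gaussFactor]
  field_simp
  ring

lemma hasDerivAt_similarityVar_y (ht : t₀ < t) :
    HasDerivAt (similarityVar t₀ x₀ y₀ t x) (-2 / ((t - t₀) * √(t - t₀))) y := by
  have h := ((((hasDerivAt_id' y).sub_const y₀).const_mul 2).const_sub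
    ((t - t₀) * (x + x₀))).div_const ((t - t₀) ^ ((3 : ℝ) / 2))
  refine h.congr_deriv ?_
  rw [rpow_three_halves (sub_pos.2 ht).le]
  simp

lemma hasDerivAt_similarityVar_x (ht : t₀ < t) :
    HasDerivAt (fun x => similarityVar t₀ x₀ y₀ t x y) (1 / √(t - t₀)) x := by
  have hτ : 0 < t - t₀ := sub_pos.2 ht
  have h := ((((hasDerivAt_id' x).add_const x₀).const_mul (t - t₀)).sub_const
    (2 * (y - y₀))).div_const ((t - t₀) ^ ((3 : ℝ) / 2))
  refine h.congr_deriv ?_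
  rw [rpow_three_halves hτ.le]
  field_simp [(sqrt_pos.2 hτ).ne']

lemma hasDerivAt_similarityVar_t (ht : t₀ < t) :
    HasDerivAt (fun t => similarityVar t₀ x₀ y₀ t x y)
      ((x + x₀) / ((t - t₀) * √(t - t₀)) - 3 / (2 * (t - t₀)) * similarityVar t₀ x₀ y₀ t x y)
      t := by
  have hτ : 0 < t - t₀ := sub_pos.2 ht
  have hp : HasDerivAt (fun s => (s - t₀) ^ ((3 : ℝ) / 2)) (3 / 2 * √(t - t₀)) t := by
    have h := (hasDerivAt_rpow_const (p := (3 : ℝ) / 2) (Or.inl hτ.ne')).comp t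
      ((hasDerivAt_id' t).sub_const t₀)
    refine h.congr_deriv ?_
    rw [sqrt_eq_rpow]
    norm_num
  have h := ((((hasDerivAt_id' t).sub_const t₀).mul_const (x + x₀)).sub_const
    (2 * (y - y₀))).fun_div hp (by rw [rpow_three_halves hτ.le]; positivity)
  refine h.congr_deriv ?_
  rw [similarityVar, rpow_three_halves hτ.le]
  field_simp

lemma hasDerivAt_gaussFactor_x_mul (t₀ x₀ t x : ℝ) :
    HasDerivAt (fun x => gaussFactor t₀ x₀ t x * (-(x - x₀) / (2 * (t - t₀))))
      (gaussFactor t₀ x₀ t x * ((-(x - x₀) / (2 * (t - t₀))) ^ 2 - 1 / (2 * (t - t₀)))) x := by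
  refine ((hasDerivAt_gaussFactor_x t₀ x₀ t x).mul
    (((hasDerivAt_id' x).sub_const x₀).fun_neg.div_const (2 * (t - t₀)))).congr_deriv ?_
  ring

variable (φ : ℝ → ℝ)

noncomputable def ansatz (t₀ x₀ y₀ t x y : ℝ) : ℝ :=
  gaussFactor t₀ x₀ t x * φ (similarityVar t₀ x₀ y₀ t x y)

variable {φ}

lemma hasDerivAt_ansatz_y (hφ : Differentiable ℝ φ) (ht : t₀ < t) :
    HasDerivAt (ansatz φ t₀ x₀ y₀ t x)
      (gaussFactor t₀ x₀ t x * deriv φ (similarityVar t₀ x₀ y₀ t x y)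
        * (-2 / ((t - t₀) * √(t - t₀)))) y := by
  refine ((hφ _).hasDerivAt.comp y (hasDerivAt_similarityVar_y ht)).const_mul
    (gaussFactor t₀ x₀ t x) |>.congr_deriv ?_
  ring

lemma hasDerivAt_ansatz_x (hφ : Differentiable ℝ φ) (ht : t₀ < t) (x : ℝ) :
    HasDerivAt (fun x => ansatz φ t₀ x₀ y₀ t x y)
      (gaussFactor t₀ x₀ t x * (-(x - x₀) / (2 * (t - t₀))) * φ (similarityVar t₀ x₀ y₀ t x y)
        + gaussFactor t₀ x₀ t x * deriv φ (similarityVar t₀ x₀ y₀ t x y) / √(t - t₀)) x := by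
  refine ((hasDerivAt_gaussFactor_x t₀ x₀ t x).mul
    ((hφ _).hasDerivAt.comp x (hasDerivAt_similarityVar_x ht))).congr_deriv ?_
  simp only [Function.comp_apply]
  ring

lemma hasDerivAt_deriv_ansatz_x (hφ : Differentiable ℝ φ) (hφ' : Differentiable ℝ (deriv φ))
    (ht : t₀ < t) :
    HasDerivAt (deriv fun x => ansatz φ t₀ x₀ y₀ t x y)
      (gaussFactor t₀ x₀ t x * (((-(x - x₀) / (2 * (t - t₀))) ^ 2 - 1 / (2 * (t - t₀)))
          * φ (similarityVar t₀ x₀ y₀ t x y)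
        - (x - x₀) / ((t - t₀) * √(t - t₀)) * deriv φ (similarityVar t₀ x₀ y₀ t x y)
        + deriv (deriv φ) (similarityVar t₀ x₀ y₀ t x y) / (t - t₀))) x := by
  have hτ : 0 < t - t₀ := sub_pos.2 ht
  rw [funext (fun x => (hasDerivAt_ansatz_x (x₀ := x₀) (y₀ := y₀) (y := y) hφ ht x).deriv)]
  have hω := hasDerivAt_similarityVar_x (x₀ := x₀) (y₀ := y₀) (x := x) (y := y) ht
  refine (((hasDerivAt_gaussFactor_x_mul t₀ x₀ t x).mul ((hφ _).hasDerivAt.comp x hω)).add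
    ((((hasDerivAt_gaussFactor_x t₀ x₀ t x).mul ((hφ' _).hasDerivAt.comp x hω))).div_const
      √(t - t₀))).congr_deriv ?_
  simp only [Function.comp_apply]
  set s := √(t - t₀)
  rw [show t - t₀ = s ^ 2 from (sq_sqrt hτ.le).symm]
  field_simp
  ring

lemma hasDerivAt_ansatz_t (hφ : Differentiable ℝ φ) (ht : t₀ < t) :
    HasDerivAt (fun t => ansatz φ t₀ x₀ y₀ t x y)
      (gaussFactor t₀ x₀ t x * (((x - x₀) ^ 2 / (4 * (t - t₀) ^ 2) - 2 / (t - t₀))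
          * φ (similarityVar t₀ x₀ y₀ t x y)
        + ((x + x₀) / ((t - t₀) * √(t - t₀)) - 3 / (2 * (t - t₀)) * similarityVar t₀ x₀ y₀ t x y)
          * deriv φ (similarityVar t₀ x₀ y₀ t x y)))
      t := by
  refine ((hasDerivAt_gaussFactor_t ht.ne').mul
    ((hφ _).hasDerivAt.comp t (hasDerivAt_similarityVar_t ht))).congr_deriv ?_
  simp only [Function.comp_apply]
  ring

theorem kolmogorovOp_ansatz (hφ : Differentiable ℝ φ) (hφ' : Differentiable ℝ (deriv φ))
    (ht : t₀ < t) :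
    kolmogorovOp (ansatz φ t₀ x₀ y₀) t x y = -(gaussFactor t₀ x₀ t x / (t - t₀)) *
          (deriv (deriv φ) (similarityVar t₀ x₀ y₀ t x y)
            + 3 / 2 * similarityVar t₀ x₀ y₀ t x y * deriv φ (similarityVar t₀ x₀ y₀ t x y)
            + 3 / 2 * φ (similarityVar t₀ x₀ y₀ t x y)) := by
  have hτ : 0 < t - t₀ := sub_pos.2 ht
  rw [kolmogorovOp, (hasDerivAt_ansatz_t hφ ht).deriv, (hasDerivAt_deriv_ansatz_x hφ hφ' ht).deriv,
    (hasDerivAt_ansatz_y hφ ht).deriv]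
  field_simp
  ring

end KolmogorovAnsatz

/-- If φ is twice differentiable and solves φ'' + (3/2)ωφ' + (3/2)φ = 0, then the ansatz
u = (t-t₀)⁻² exp(-(x-x₀)²/(4(t-t₀))) φ(ω), ω = ((t-t₀)(x+x₀)-2(y-y₀))/(t-t₀)^{3/2},
solves u_t - u_xx + x u_y = 0 for t > t₀. -/
theorem stmt2 (t₀ x₀ y₀ : ℝ) (φ : ℝ → ℝ)
    (hφ1 : Differentiable ℝ φ) (hφ2 : Differentiable ℝ (deriv φ))
    (hode : ∀ ω : ℝ, deriv (deriv φ) ω + 3 / 2 * ω * deriv φ ω + 3 / 2 * φ ω = 0)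
    (t x y : ℝ) (ht : t₀ < t) :
    let u : ℝ → ℝ → ℝ → ℝ := fun t x y =>
      ((t - t₀) ^ 2)⁻¹ * Real.exp (-(x - x₀) ^ 2 / (4 * (t - t₀))) *
        φ (((t - t₀) * (x + x₀) - 2 * (y - y₀)) / (t - t₀) ^ ((3 : ℝ) / 2))
    deriv (fun s => u s x y) t
      - deriv (fun s => deriv (fun r => u t r y) s) x
      + x * deriv (fun s => u t x s) y = 0 := by
  show KolmogorovAnsatz.kolmogorovOp (KolmogorovAnsatz.ansatz φ t₀ x₀ y₀) t x y = 0
  rw [KolmogorovAnsatz.kolmogorovOp_ansatz hφ1 hφ2 ht, hode, mul_zero]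
end

section
/- If u(t,x,y) is a smooth solution of u_t - u_xx + x u_y = 0, then v = 2t u_x + t² u_y + x u is also a solution of the same equation. -/
open Real

noncomputable section StmtAux

abbrev P3 := ℝ × ℝ × ℝ

/-- directional (partial) derivative -/
noncomputable def pd (v : P3) (f : P3 → ℝ) : P3 → ℝ := fun p => fderiv ℝ f p v

lemma pd_contDiff {f : P3 → ℝ} (hf : ContDiff ℝ (⊤ : ℕ∞) f) (v : P3) :
    ContDiff ℝ (⊤ : ℕ∞) (pd v f) :=
  (hf.fderiv_right (by simp)).clm_apply contDiff_const

lemma pd_comm {f : P3 → ℝ} (hf : ContDiff ℝ (⊤ : ℕ∞) f) (v w : P3) (p : P3) :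
    pd v (pd w f) p = pd w (pd v f) p := by
  have hd : Differentiable ℝ (fderiv ℝ f) :=
    (hf.fderiv_right (m := (⊤ : ℕ∞)) (by simp)).differentiable (by simp)
  have key : ∀ a b : P3, pd a (pd b f) p = fderiv ℝ (fderiv ℝ f) p a b := by
    intro a b
    have : pd b f = fun q => (fderiv ℝ f q) ((fun _ : P3 => b) q) := rfl
    rw [pd, this, fderiv_clm_apply (hd p) (differentiableAt_const b)]
    simp
  rw [key, key]
  exact (hf.contDiffAt.isSymmSndFDerivAt (by rw [minSmoothness_of_isRCLikeNormedField]; exact WithTop.coe_le_coe.mpr (le_top : (2 : ℕ∞) ≤ ⊤))).eq v w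

lemma pd_comm' {f : P3 → ℝ} (hf : ContDiff ℝ (⊤ : ℕ∞) f) (v w : P3) :
    pd v (pd w f) = pd w (pd v f) := funext (pd_comm hf v w)

lemma line1 {g : P3 → ℝ} (hg : ContDiff ℝ (⊤ : ℕ∞) g) (t x y : ℝ) :
    HasDerivAt (fun s => g (s, x, y)) (pd (1,0,0) g (t,x,y)) t := by
  have h1 : HasDerivAt (fun s : ℝ => ((s, x, y) : P3)) (1,0,0) t :=
    (hasDerivAt_id t).prodMk ((hasDerivAt_const t x).prodMk (hasDerivAt_const t y))
  exact ((hg.differentiable (by simp) (t,x,y)).hasFDerivAt.comp_hasDerivAt t h1)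

lemma line2 {g : P3 → ℝ} (hg : ContDiff ℝ (⊤ : ℕ∞) g) (t x y : ℝ) :
    HasDerivAt (fun r => g (t, r, y)) (pd (0,1,0) g (t,x,y)) x := by
  have h1 : HasDerivAt (fun r : ℝ => ((t, r, y) : P3)) (0,1,0) x :=
    (hasDerivAt_const x t).prodMk ((hasDerivAt_id x).prodMk (hasDerivAt_const x y))
  exact ((hg.differentiable (by simp) (t,x,y)).hasFDerivAt.comp_hasDerivAt x h1)

lemma line3 {g : P3 → ℝ} (hg : ContDiff ℝ (⊤ : ℕ∞) g) (t x y : ℝ) :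
    HasDerivAt (fun s => g (t, x, s)) (pd (0,0,1) g (t,x,y)) y := by
  have h1 : HasDerivAt (fun s : ℝ => ((t, x, s) : P3)) (0,0,1) y :=
    (hasDerivAt_const y t).prodMk ((hasDerivAt_const y x).prodMk (hasDerivAt_id y))
  exact ((hg.differentiable (by simp) (t,x,y)).hasFDerivAt.comp_hasDerivAt y h1)

end StmtAux

/-- Lie symmetry of the ultra-parabolic Kolmogorov equation u_t - u_xx + x u_y = 0. -/
theorem stmt5 (u : ℝ → ℝ → ℝ → ℝ)
    (hu : ContDiff ℝ (⊤ : ℕ∞) (fun p : ℝ × ℝ × ℝ => u p.1 p.2.1 p.2.2))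
    (hsol : ∀ t x y : ℝ,
      deriv (fun s => u s x y) t - deriv (fun s => deriv (fun r => u t r y) s) x
        + x * deriv (fun s => u t x s) y = 0) :
    let v : ℝ → ℝ → ℝ → ℝ := fun t x y =>
      2 * t * deriv (fun r => u t r y) x + t ^ 2 * deriv (fun s => u t x s) y + x * u t x y
    ∀ t x y : ℝ,
      deriv (fun s => v s x y) t - deriv (fun s => deriv (fun r => v t r y) s) x
        + x * deriv (fun s => v t x s) y = 0 := by
  intro v t x y
  set F : P3 → ℝ := fun p => u p.1 p.2.1 p.2.2 with hFdef
  have hF : ContDiff ℝ (⊤ : ℕ∞) F := hu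
  -- smoothness of pd's of F
  have hF2 : ContDiff ℝ (⊤ : ℕ∞) (pd (0,1,0) F) := pd_contDiff hF _
  have hF3 : ContDiff ℝ (⊤ : ℕ∞) (pd (0,0,1) F) := pd_contDiff hF _
  have hF1 : ContDiff ℝ (⊤ : ℕ∞) (pd (1,0,0) F) := pd_contDiff hF _
  have hF22 : ContDiff ℝ (⊤ : ℕ∞) (pd (0,1,0) (pd (0,1,0) F)) := pd_contDiff hF2 _
  have hF23 : ContDiff ℝ (⊤ : ℕ∞) (pd (0,1,0) (pd (0,0,1) F)) := pd_contDiff hF3 _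
  -- reformulate the PDE hypothesis
  have hE : ∀ p : P3,
      pd (1,0,0) F p - pd (0,1,0) (pd (0,1,0) F) p + p.2.1 * pd (0,0,1) F p = 0 := by
    rintro ⟨a, b, c⟩
    have h := hsol a b c
    have e1 : deriv (fun s => u s b c) a = pd (1,0,0) F (a,b,c) := (line1 hF a b c).deriv
    have e3 : deriv (fun s => u a b s) c = pd (0,0,1) F (a,b,c) := (line3 hF a b c).deriv
    have einner : (fun s => deriv (fun r => u a r c) s) = fun s => pd (0,1,0) F (a,s,c) := by
      funext s; exact (line2 hF a s c).deriv
    have e2 : deriv (fun s => deriv (fun r => u a r c) s) b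
        = pd (0,1,0) (pd (0,1,0) F) (a,b,c) := by
      rw [einner]; exact (line2 hF2 a b c).deriv
    rw [e1, e2, e3] at h
    exact h
  -- E is the zero function, hence its pd's vanish
  set E : P3 → ℝ := fun p =>
      pd (1,0,0) F p - pd (0,1,0) (pd (0,1,0) F) p + p.2.1 * pd (0,0,1) F p with hEdef
  have hE0 : E = fun _ => (0:ℝ) := funext hE
  have hpdE : ∀ w : P3, ∀ p : P3, pd w E p = 0 := by
    intro w p; rw [pd, hE0]; simp
  have hEsmooth : ContDiff ℝ (⊤ : ℕ∞) E := by
    exact (hF1.sub hF22).add ((contDiff_fst.comp contDiff_snd).mul hF3)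
  -- expansion of pd (0,1,0) E and pd (0,0,1) E
  have hI2 : pd (0,1,0) (pd (1,0,0) F) (t,x,y)
      - pd (0,1,0) (pd (0,1,0) (pd (0,1,0) F)) (t,x,y)
      + (1 * pd (0,0,1) F (t,x,y) + x * pd (0,1,0) (pd (0,0,1) F) (t,x,y)) = 0 := by
    have h1 := line2 hEsmooth t x y
    have h2 : HasDerivAt (fun r => E (t,r,y))
        (pd (0,1,0) (pd (1,0,0) F) (t,x,y)
          - pd (0,1,0) (pd (0,1,0) (pd (0,1,0) F)) (t,x,y)
          + (1 * pd (0,0,1) F (t,x,y) + x * pd (0,1,0) (pd (0,0,1) F) (t,x,y))) x := by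
      exact ((line2 hF1 t x y).sub (line2 hF22 t x y)).add
        ((hasDerivAt_id x).mul (line2 hF3 t x y))
    rw [← h1.unique h2]
    exact hpdE _ _
  have hI3 : pd (0,0,1) (pd (1,0,0) F) (t,x,y)
      - pd (0,0,1) (pd (0,1,0) (pd (0,1,0) F)) (t,x,y)
      + x * pd (0,0,1) (pd (0,0,1) F) (t,x,y) = 0 := by
    have h1 := line3 hEsmooth t x y
    have h2 : HasDerivAt (fun s => E (t,x,s))
        (pd (0,0,1) (pd (1,0,0) F) (t,x,y)
          - pd (0,0,1) (pd (0,1,0) (pd (0,1,0) F)) (t,x,y)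
          + x * pd (0,0,1) (pd (0,0,1) F) (t,x,y)) y := by
      exact ((line3 hF1 t x y).sub (line3 hF22 t x y)).add
        ((line3 hF3 t x y).const_mul x)
    rw [← h1.unique h2]
    exact hpdE _ _
  -- the function V
  set V : P3 → ℝ := fun p =>
      2 * p.1 * pd (0,1,0) F p + p.1 ^ 2 * pd (0,0,1) F p + p.2.1 * F p with hVdef
  have hVsmooth : ContDiff ℝ (⊤ : ℕ∞) V := by
    exact (((contDiff_const.mul contDiff_fst).mul hF2).add
      ((contDiff_fst.pow 2).mul hF3)).add ((contDiff_fst.comp contDiff_snd).mul hF)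
  have hveq : ∀ a b c : ℝ, v a b c = V (a,b,c) := by
    intro a b c
    simp only [v, hVdef]
    rw [(line2 hF a b c).deriv, (line3 hF a b c).deriv]
  -- the three first partial derivatives of V, pointwise
  have hV1 : ∀ a b c : ℝ, pd (1,0,0) V (a,b,c)
      = 2 * pd (0,1,0) F (a,b,c) + 2 * a * pd (1,0,0) (pd (0,1,0) F) (a,b,c)
        + 2 * a * pd (0,0,1) F (a,b,c) + a ^ 2 * pd (1,0,0) (pd (0,0,1) F) (a,b,c)
        + b * pd (1,0,0) F (a,b,c) := by
    intro a b c
    have h1 := line1 hVsmooth a b c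
    have h2 : HasDerivAt (fun s : ℝ =>
        2 * s * pd (0,1,0) F (s,b,c) + s ^ 2 * pd (0,0,1) F (s,b,c) + b * F (s,b,c))
        ((2 * 1 * pd (0,1,0) F (a,b,c) + 2 * a * pd (1,0,0) (pd (0,1,0) F) (a,b,c))
          + ((↑(2:ℕ) * a ^ 1) * pd (0,0,1) F (a,b,c) + a ^ 2 * pd (1,0,0) (pd (0,0,1) F) (a,b,c))
          + b * pd (1,0,0) F (a,b,c)) a := by
      exact ((((hasDerivAt_id a).const_mul 2).mul (line1 hF2 a b c)).add
        ((hasDerivAt_pow 2 a).mul (line1 hF3 a b c))).add ((line1 hF a b c).const_mul b)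
    have h1' : HasDerivAt (fun s : ℝ =>
        2 * s * pd (0,1,0) F (s,b,c) + s ^ 2 * pd (0,0,1) F (s,b,c) + b * F (s,b,c))
        (pd (1,0,0) V (a,b,c)) a := h1
    rw [h1'.unique h2]
    push_cast
    ring
  have hV2 : ∀ a b c : ℝ, pd (0,1,0) V (a,b,c)
      = 2 * a * pd (0,1,0) (pd (0,1,0) F) (a,b,c)
        + a ^ 2 * pd (0,1,0) (pd (0,0,1) F) (a,b,c)
        + F (a,b,c) + b * pd (0,1,0) F (a,b,c) := by
    intro a b c
    have h1 : HasDerivAt (fun r : ℝ =>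
        2 * a * pd (0,1,0) F (a,r,c) + a ^ 2 * pd (0,0,1) F (a,r,c) + r * F (a,r,c))
        (pd (0,1,0) V (a,b,c)) b := line2 hVsmooth a b c
    have h2 : HasDerivAt (fun r : ℝ =>
        2 * a * pd (0,1,0) F (a,r,c) + a ^ 2 * pd (0,0,1) F (a,r,c) + r * F (a,r,c))
        ((2 * a * pd (0,1,0) (pd (0,1,0) F) (a,b,c))
          + a ^ 2 * pd (0,1,0) (pd (0,0,1) F) (a,b,c)
          + (1 * F (a,b,c) + b * pd (0,1,0) F (a,b,c))) b := by
      exact (((line2 hF2 a b c).const_mul (2*a)).add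
        ((line2 hF3 a b c).const_mul (a^2))).add ((hasDerivAt_id b).mul (line2 hF a b c))
    rw [h1.unique h2]
    ring
  have hV3 : ∀ a b c : ℝ, pd (0,0,1) V (a,b,c)
      = 2 * a * pd (0,0,1) (pd (0,1,0) F) (a,b,c)
        + a ^ 2 * pd (0,0,1) (pd (0,0,1) F) (a,b,c)
        + b * pd (0,0,1) F (a,b,c) := by
    intro a b c
    have h1 : HasDerivAt (fun s : ℝ =>
        2 * a * pd (0,1,0) F (a,b,s) + a ^ 2 * pd (0,0,1) F (a,b,s) + b * F (a,b,s))
        (pd (0,0,1) V (a,b,c)) c := line3 hVsmooth a b c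
    have h2 : HasDerivAt (fun s : ℝ =>
        2 * a * pd (0,1,0) F (a,b,s) + a ^ 2 * pd (0,0,1) F (a,b,s) + b * F (a,b,s))
        ((2 * a * pd (0,0,1) (pd (0,1,0) F) (a,b,c))
          + a ^ 2 * pd (0,0,1) (pd (0,0,1) F) (a,b,c)
          + b * pd (0,0,1) F (a,b,c)) c := by
      exact (((line3 hF2 a b c).const_mul (2*a)).add
        ((line3 hF3 a b c).const_mul (a^2))).add ((line3 hF a b c).const_mul b)
    rw [h1.unique h2]
  -- second x derivative of V
  have hV2fun : pd (0,1,0) V = fun p : P3 =>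
      2 * p.1 * pd (0,1,0) (pd (0,1,0) F) p + p.1 ^ 2 * pd (0,1,0) (pd (0,0,1) F) p
        + F p + p.2.1 * pd (0,1,0) F p := by
    funext p; obtain ⟨a,b,c⟩ := p; exact hV2 a b c
  have hWsmooth : ContDiff ℝ (⊤ : ℕ∞) (fun p : P3 =>
      2 * p.1 * pd (0,1,0) (pd (0,1,0) F) p + p.1 ^ 2 * pd (0,1,0) (pd (0,0,1) F) p
        + F p + p.2.1 * pd (0,1,0) F p) := by
    exact ((((contDiff_const.mul contDiff_fst).mul hF22).add
      ((contDiff_fst.pow 2).mul hF23)).add hF).add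
      ((contDiff_fst.comp contDiff_snd).mul hF2)
  have hV22 : pd (0,1,0) (pd (0,1,0) V) (t,x,y)
      = 2 * t * pd (0,1,0) (pd (0,1,0) (pd (0,1,0) F)) (t,x,y)
        + t ^ 2 * pd (0,1,0) (pd (0,1,0) (pd (0,0,1) F)) (t,x,y)
        + pd (0,1,0) F (t,x,y)
        + (pd (0,1,0) F (t,x,y) + x * pd (0,1,0) (pd (0,1,0) F) (t,x,y)) := by
    rw [hV2fun]
    have h1 : HasDerivAt (fun r : ℝ =>
        2 * t * pd (0,1,0) (pd (0,1,0) F) (t,r,y) + t ^ 2 * pd (0,1,0) (pd (0,0,1) F) (t,r,y)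
          + F (t,r,y) + r * pd (0,1,0) F (t,r,y))
        (pd (0,1,0) (fun p : P3 =>
          2 * p.1 * pd (0,1,0) (pd (0,1,0) F) p + p.1 ^ 2 * pd (0,1,0) (pd (0,0,1) F) p
            + F p + p.2.1 * pd (0,1,0) F p) (t,x,y)) x := line2 hWsmooth t x y
    have h2 : HasDerivAt (fun r : ℝ =>
        2 * t * pd (0,1,0) (pd (0,1,0) F) (t,r,y) + t ^ 2 * pd (0,1,0) (pd (0,0,1) F) (t,r,y)
          + F (t,r,y) + r * pd (0,1,0) F (t,r,y))
        ((2 * t * pd (0,1,0) (pd (0,1,0) (pd (0,1,0) F)) (t,x,y)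
          + t ^ 2 * pd (0,1,0) (pd (0,1,0) (pd (0,0,1) F)) (t,x,y)
          + pd (0,1,0) F (t,x,y))
          + (1 * pd (0,1,0) F (t,x,y) + x * pd (0,1,0) (pd (0,1,0) F) (t,x,y))) x := by
      exact ((((line2 hF22 t x y).const_mul (2*t)).add
        ((line2 hF23 t x y).const_mul (t^2))).add (line2 hF t x y)).add
        ((hasDerivAt_id x).mul (line2 hF2 t x y))
    rw [h1.unique h2]
    ring
  -- rewrite the goal in terms of pd of V
  have g1 : deriv (fun s => v s x y) t = pd (1,0,0) V (t,x,y) := by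
    have : (fun s => v s x y) = fun s => V (s,x,y) := funext fun s => hveq s x y
    rw [this]; exact (line1 hVsmooth t x y).deriv
  have g3 : deriv (fun s => v t x s) y = pd (0,0,1) V (t,x,y) := by
    have : (fun s => v t x s) = fun s => V (t,x,s) := funext fun s => hveq t x s
    rw [this]; exact (line3 hVsmooth t x y).deriv
  have g2 : deriv (fun s => deriv (fun r => v t r y) s) x
      = pd (0,1,0) (pd (0,1,0) V) (t,x,y) := by
    have hin : (fun s => deriv (fun r => v t r y) s) = fun s => pd (0,1,0) V (t,s,y) := by
      funext s
      have : (fun r => v t r y) = fun r => V (t,r,y) := funext fun r => hveq t r y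
      rw [this]; exact (line2 hVsmooth t s y).deriv
    rw [hin]; exact (line2 (pd_contDiff hVsmooth _) t x y).deriv
  rw [g1, g2, g3, hV1, hV3, hV22]
  -- normalize the order of mixed partial derivatives
  have c12 : pd (1,0,0) (pd (0,1,0) F) (t,x,y) = pd (0,1,0) (pd (1,0,0) F) (t,x,y) :=
    pd_comm hF _ _ _
  have c13 : pd (1,0,0) (pd (0,0,1) F) (t,x,y) = pd (0,0,1) (pd (1,0,0) F) (t,x,y) :=
    pd_comm hF _ _ _
  have c23 : pd (0,0,1) (pd (0,1,0) F) (t,x,y) = pd (0,1,0) (pd (0,0,1) F) (t,x,y) :=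
    pd_comm hF _ _ _
  have c223 : pd (0,1,0) (pd (0,1,0) (pd (0,0,1) F)) (t,x,y)
      = pd (0,0,1) (pd (0,1,0) (pd (0,1,0) F)) (t,x,y) := by
    rw [← pd_comm' hF (0,0,1) (0,1,0)]
    exact pd_comm hF2 _ _ _
  have hI0 := hE (t,x,y)
  simp only at hI0
  rw [c12, c13, c23, c223]
  linear_combination (2*t) * hI2 + t^2 * hI3 + x * hI0
end

section
/- The functions I₁(t,x,y,u) = (t-t₀)² exp((x-x₀)²/(4(t-t₀))) u and I₂(t,x,y) = ((t-t₀)(x+x₀) - 2(y-y₀))/(t-t₀)^{3/2} are invariants of the vector fields Y₁ and Y₄: both Y₁I₁ = 0, Y₄I₁ = 0, Y₁I₂ = 0, Y₄I₂ = 0 hold on the region t > t₀. -/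
open Real

section

variable {a t : ℝ}

theorem hasDerivAt_sq_mul_exp_div (c : ℝ) (ht : a < t) :
    HasDerivAt (fun s => (s - a) ^ 2 * exp (c / (4 * (s - a))))
      ((2 * (t - a) - c / 4) * exp (c / (4 * (t - a)))) t := by
  have hτ : t - a ≠ 0 := (sub_pos.2 ht).ne'
  have hsub : HasDerivAt (fun s => s - a) 1 t := (hasDerivAt_id t).sub_const a
  refine ((hsub.fun_pow 2).mul
    ((hasDerivAt_const t c).fun_div (hsub.const_mul 4) (by simpa using hτ)).exp).congr_deriv ?_
  field_simp
  ring

theorem hasDerivAt_sub_mul_sub_div_rpow (b c p : ℝ) (ht : a < t) :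
    HasDerivAt (fun s => ((s - a) * b - c) / (s - a) ^ p)
      (((1 - p) * b * (t - a) + p * c) / ((t - a) * (t - a) ^ p)) t := by
  have hτ : 0 < t - a := sub_pos.2 ht
  have hsub : HasDerivAt (fun s => s - a) 1 t := (hasDerivAt_id t).sub_const a
  refine (((hsub.mul_const b).sub_const c).div (hsub.rpow_const (Or.inl hτ.ne'))
    (rpow_pos_of_pos hτ p).ne').congr_deriv ?_
  rw [rpow_sub_one hτ.ne']
  field_simp
  ring

end

/-- I₁ = (t-t₀)² exp((x-x₀)²/(4(t-t₀))) u and I₂ = ((t-t₀)(x+x₀)-2(y-y₀))/(t-t₀)^{3/2}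
are annihilated by the vector fields
Y₁ = 2(t-t₀)∂_t + (x-x₀)∂_x - (x₀(t-t₀)-3(y-y₀))∂_y - 4u∂_u and
Y₄ = 2(t-t₀)∂_x + (t-t₀)²∂_y - (x-x₀)u∂_u on the region t > t₀. -/
theorem stmt12 (t₀ x₀ y₀ : ℝ) :
    let I₁ : ℝ → ℝ → ℝ → ℝ → ℝ := fun t x y u =>
      (t - t₀) ^ 2 * Real.exp ((x - x₀) ^ 2 / (4 * (t - t₀))) * u
    let I₂ : ℝ → ℝ → ℝ → ℝ → ℝ := fun t x y _u =>
      ((t - t₀) * (x + x₀) - 2 * (y - y₀)) / (t - t₀) ^ ((3 : ℝ) / 2)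
    let Y₁ : (ℝ → ℝ → ℝ → ℝ → ℝ) → ℝ → ℝ → ℝ → ℝ → ℝ := fun I t x y u =>
      2 * (t - t₀) * deriv (fun s => I s x y u) t
        + (x - x₀) * deriv (fun s => I t s y u) x
        - (x₀ * (t - t₀) - 3 * (y - y₀)) * deriv (fun s => I t x s u) y
        - 4 * u * deriv (fun s => I t x y s) u
    let Y₄ : (ℝ → ℝ → ℝ → ℝ → ℝ) → ℝ → ℝ → ℝ → ℝ → ℝ := fun I t x y u =>
      2 * (t - t₀) * deriv (fun s => I t s y u) x
        + (t - t₀) ^ 2 * deriv (fun s => I t x s u) y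
        - (x - x₀) * u * deriv (fun s => I t x y s) u
    ∀ t x y u : ℝ, t₀ < t →
      Y₁ I₁ t x y u = 0 ∧ Y₄ I₁ t x y u = 0 ∧ Y₁ I₂ t x y u = 0 ∧ Y₄ I₂ t x y u = 0 := by
  intro I₁ I₂ Y₁ Y₄ t x y u ht
  have hτ : t - t₀ ≠ 0 := (sub_pos.2 ht).ne'
  have hI₁t := ((hasDerivAt_sq_mul_exp_div ((x - x₀) ^ 2) ht).mul_const u).deriv
  have hI₁x := ((((((hasDerivAt_id x).sub_const x₀).fun_pow 2).div_const
    (4 * (t - t₀))).exp.const_mul ((t - t₀) ^ 2)).mul_const u).deriv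
  have hI₁u :=
    ((hasDerivAt_id u).const_mul ((t - t₀) ^ 2 * exp ((x - x₀) ^ 2 / (4 * (t - t₀))))).deriv
  have hI₂t := (hasDerivAt_sub_mul_sub_div_rpow (x + x₀) (2 * (y - y₀)) ((3 : ℝ) / 2) ht).deriv
  have hI₂x := ((((hasDerivAt_id x).add_const x₀).const_mul (t - t₀)).sub_const
    (2 * (y - y₀))).div_const ((t - t₀) ^ ((3 : ℝ) / 2)) |>.deriv
  have hI₂y := (((hasDerivAt_id y).sub_const y₀).const_mul 2).const_sub ((t - t₀) * (x + x₀))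
    |>.div_const ((t - t₀) ^ ((3 : ℝ) / 2)) |>.deriv
  simp only [id] at hI₁x hI₁u hI₂x hI₂y
  refine ⟨?_, ?_, ?_, ?_⟩ <;>
    simp only [Y₁, Y₄, I₁, I₂, hI₁t, hI₁x, hI₁u, hI₂t, hI₂x, hI₂y, deriv_const] <;>
    field_simp <;> ring
end
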